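/- arXiv:1907.07896 — 4 statements merged into one kernel-verified Lean document; each statement's English description precedes it below -/
import Mathlib

section
/- Let n ≥ 1, k > 0, c > 0, and β₁,…,βₙ > 0 with ∑βᵢ = 1. The function F(x) = -∑_{i=1}^n βᵢ·xᵢ/(kβᵢ + xᵢ) attains its minimum over the set { x ∈ (ℝ≥0)^{n+1} : xᵢ ≤ βᵢ·x₀ for all i ∈ [n], and ∑_{i=0}^n xᵢ = c } at the point x̂ = (c/2, β₁c/2, …, βₙc/2). -/
/-! Each summand `t ↦ β t / (k β + t)` is concave on `t ≥ 0`, so it lies below its tangent line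
at `t = β p` with `p = c / 2`; all these tangents have the same slope `k / (k + p)²`. Summing,
`-F x ≥ p / (k + p) + k (∑ xᵢ - p) / (k + p)²`, and the caps give `∑_{i ≥ 1} xᵢ ≤ x₀`, hence
`∑_{i ≥ 1} xᵢ ≤ p`, so `-F x ≤ p / (k + p) = -F x̂`. -/

open Finset

lemma mul_div_add_le_tangent {k b p t : ℝ} (hk : 0 < k) (hb : 0 < b) (hp : 0 ≤ p) (ht : 0 ≤ t) :
    b * t / (k * b + t) ≤ b * p / (k + p) + k * (t - b * p) / (k + p) ^ 2 := by
  have hkp : 0 < k + p := by linarith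
  have hden : 0 < k * b + t := by positivity
  rw [div_add_div _ _ hkp.ne' (by positivity), div_le_div_iff₀ hden (by positivity)]
  nlinarith [mul_nonneg (mul_nonneg hk.le hkp.le) (sq_nonneg (t - b * p))]

section WeightedSaturation

variable {ι : Type*} [Fintype ι] {β : ι → ℝ} {k p : ℝ}

lemma sum_mul_div_add_le (hk : 0 < k) (hp : 0 ≤ p) (hβ : ∀ i, 0 < β i) (hsum : ∑ i, β i = 1)
    {y : ι → ℝ} (hy : ∀ i, 0 ≤ y i) (hyp : ∑ i, y i ≤ p) :
    ∑ i, β i * y i / (k * β i + y i) ≤ p / (k + p) := by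
  have hslack : k * (∑ i, y i - p) / (k + p) ^ 2 ≤ 0 :=
    div_nonpos_of_nonpos_of_nonneg (mul_nonpos_of_nonneg_of_nonpos hk.le (by linarith))
      (sq_nonneg _)
  calc ∑ i, β i * y i / (k * β i + y i)
      ≤ ∑ i, (β i * p / (k + p) + k * (y i - β i * p) / (k + p) ^ 2) :=
        sum_le_sum fun i _ => mul_div_add_le_tangent hk (hβ i) hp (hy i)
    _ = p / (k + p) + k * (∑ i, y i - p) / (k + p) ^ 2 := by
        rw [sum_add_distrib, ← sum_div, ← sum_div, ← sum_mul, ← mul_sum, sum_sub_distrib,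
          ← sum_mul, hsum, one_mul]
    _ ≤ p / (k + p) := by linarith

lemma sum_mul_div_add_proportional (hk : 0 < k) (hp : 0 ≤ p) (hβ : ∀ i, 0 < β i)
    (hsum : ∑ i, β i = 1) :
    ∑ i, β i * (β i * p) / (k * β i + β i * p) = p / (k + p) := by
  have hkp : k + p ≠ 0 := by positivity
  calc ∑ i, β i * (β i * p) / (k * β i + β i * p) = ∑ i, β i * (p / (k + p)) :=
        sum_congr rfl fun i _ => by
          have := (hβ i).ne'
          field_simp
    _ = p / (k + p) := by rw [← sum_mul, hsum, one_mul]

end WeightedSaturation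

lemma sum_tail_le_half {n : ℕ} {β : Fin n → ℝ} (hsum : ∑ i, β i = 1) {x : Fin (n + 1) → ℝ}
    (hcap : ∀ i : Fin n, x i.succ ≤ β i * x 0) :
    ∑ i : Fin n, x i.succ ≤ (∑ j, x j) / 2 := by
  have htail : ∑ i : Fin n, x i.succ ≤ x 0 :=
    calc ∑ i : Fin n, x i.succ ≤ ∑ i, β i * x 0 := sum_le_sum fun i _ => hcap i
      _ = x 0 := by rw [← sum_mul, hsum, one_mul]
  rw [Fin.sum_univ_succ]
  linarith

theorem stmt2_general (n : ℕ) (k c : ℝ) (hk : 0 < k)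
    (β : Fin n → ℝ) (hβ : ∀ i, 0 < β i) (hsum : ∑ i, β i = 1)
    (F : (Fin (n + 1) → ℝ) → ℝ)
    (hF : F = fun x => -∑ i, β i * x i.succ / (k * β i + x i.succ))
    (xhat : Fin (n + 1) → ℝ)
    (hxhat : xhat = fun j => if h : j = 0 then c / 2 else β (j.pred h) * c / 2) :
    ∀ x : Fin (n + 1) → ℝ, (∀ j, 0 ≤ x j) → (∀ i : Fin n, x i.succ ≤ β i * x 0) →
      (∑ j, x j = c) → F xhat ≤ F x := by
  intro x hx hcap hxc
  subst hF hxhat hxc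
  have hp : 0 ≤ (∑ j, x j) / 2 := div_nonneg (sum_nonneg fun j _ => hx j) zero_le_two
  have hxhat_succ : ∀ i : Fin n, β i * (∑ j, x j) / 2 = β i * ((∑ j, x j) / 2) :=
    fun i => mul_div_assoc _ _ _
  simp only [Fin.succ_ne_zero, dite_false, Fin.pred_succ, hxhat_succ, neg_le_neg_iff,
    sum_mul_div_add_proportional hk hp hβ hsum]
  exact sum_mul_div_add_le hk hp hβ hsum (fun i => hx i.succ) (sum_tail_le_half hsum hcap)

theorem stmt2 (n : ℕ) (hn : 1 ≤ n) (k c : ℝ) (hk : 0 < k) (hc : 0 < c)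
    (β : Fin n → ℝ) (hβ : ∀ i, 0 < β i) (hsum : ∑ i, β i = 1)
    (F : (Fin (n + 1) → ℝ) → ℝ)
    (hF : F = fun x => -∑ i, β i * x i.succ / (k * β i + x i.succ))
    (xhat : Fin (n + 1) → ℝ)
    (hxhat : xhat = fun j => if h : j = 0 then c / 2 else β (j.pred h) * c / 2) :
    ∀ x : Fin (n + 1) → ℝ, (∀ j, 0 ≤ x j) → (∀ i : Fin n, x i.succ ≤ β i * x 0) →
      (∑ j, x j = c) → F xhat ≤ F x :=
  stmt2_general n k c hk β hβ hsum F hF xhat hxhat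
end

section
/- Define seff_i(s) = min(βᵢ·s₀, sᵢ) for a partition s = (s₀,…,sₙ). Suppose s is a feasible partition (all sᵢ ≥ 0, ∑ sᵢ = c) with sᵢ > βᵢ·s₀ for some i. Let a be an index maximizing sₐ/βₐ among indices with sᵢ > βᵢs₀, and define s⁺ by s⁺ₐ = (βₐ/(βₐ+1))(s₀ + sₐ), s⁺₀ = (1/(βₐ+1))(s₀ + sₐ), and s⁺ⱼ = sⱼ otherwise. Then s⁺ is feasible (nonnegative, sums to c), seff_j(s⁺) ≥ seff_j(s) for all j ∈ [n], and seff_a(s⁺) > seff_a(s). -/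
open Finset

/-!
Moving the surplus `s a - β a * s 0` of an over-provisioned chain `a` into the shared space `s 0`
so that the pair ends exactly on the line `s⁺ a = β a * s⁺ 0` keeps the total, can only enlarge
`s 0` (strictly, since the surplus is positive), and leaves the other chains untouched; so every
effective space `min (β i * s 0) (s i)` weakly grows, and that of `a` grows strictly.
-/

theorem Finset.sum_eq_sum_of_eq_off_pair {ι M : Type*} [Fintype ι] [DecidableEq ι]
    [AddCommGroup M] {f g : ι → M} {i j : ι} (hij : i ≠ j) (hpair : f i + f j = g i + g j)
    (hoff : ∀ k, k ≠ i → k ≠ j → f k = g k) : ∑ k, f k = ∑ k, g k := by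
  have hdiff : ∑ k, (f k - g k) = (f i - g i) + (f j - g j) :=
    sum_eq_add_of_mem i j (mem_univ _) (mem_univ _) hij fun k _ hk => by
      rw [hoff k (by tauto) (by tauto), sub_self]
  rw [← sub_eq_zero, ← sum_sub_distrib, hdiff, sub_add_sub_comm, sub_eq_zero, hpair]

theorem lt_one_div_add_one_mul_add {b x y : ℝ} (hb : 0 < b) (h : b * x < y) :
    x < 1 / (b + 1) * (x + y) := by
  rw [one_div_mul_eq_div, lt_div_iff₀ (by linarith)]
  linarith

theorem stmt5_general (n : ℕ) (c : ℝ)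
    (β : Fin n → ℝ) (hβ : ∀ i, 0 < β i)
    (s : Fin (n + 1) → ℝ) (hs0 : ∀ j, 0 ≤ s j) (hsc : ∑ j, s j = c)
    (a : Fin n) (ha : β a * s 0 < s a.succ)
    (splus : Fin (n + 1) → ℝ)
    (hsplus : splus = fun j => if j = a.succ then β a / (β a + 1) * (s 0 + s a.succ)
      else if j = 0 then 1 / (β a + 1) * (s 0 + s a.succ) else s j) :
    (∀ j, 0 ≤ splus j) ∧ (∑ j, splus j = c) ∧
    (∀ i : Fin n, min (β i * s 0) (s i.succ) ≤ min (β i * splus 0) (splus i.succ)) ∧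
    min (β a * s 0) (s a.succ) < min (β a * splus 0) (splus a.succ) := by
  have hne : a.succ ≠ 0 := Fin.succ_ne_zero a
  have hsplus0 : splus 0 = 1 / (β a + 1) * (s 0 + s a.succ) := by simp [hsplus, hne.symm]
  have hsplusa : splus a.succ = β a * splus 0 := by
    rw [hsplus0, hsplus]; simp only [if_true]; ring
  have hoff : ∀ j, j ≠ a.succ → j ≠ 0 → splus j = s j := fun j h₁ h₀ => by simp [hsplus, h₁, h₀]
  have hgrow : s 0 < splus 0 := hsplus0 ▸ lt_one_div_add_one_mul_add (hβ a) ha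
  refine ⟨fun j => ?_, ?_, fun i => ?_, ?_⟩
  · have := hβ a; have := hs0 0; have := hs0 a.succ
    rw [hsplus]; dsimp only
    split_ifs
    · positivity
    · positivity
    · exact hs0 j
  · have hpair : splus a.succ + splus 0 = s a.succ + s 0 := by
      have : β a + 1 ≠ 0 := by linarith [hβ a]
      rw [hsplusa, hsplus0]; field_simp; ring
    rw [← hsc, sum_eq_sum_of_eq_off_pair hne hpair hoff]
  · have hmono : β i * s 0 ≤ β i * splus 0 := by gcongr; exact (hβ i).le
    rcases eq_or_ne i a with rfl | hia
    · rw [hsplusa, min_self]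
      exact (min_le_left _ _).trans hmono
    · rw [hoff _ ((Fin.succ_injective n).ne hia) (Fin.succ_ne_zero i)]
      exact min_le_min_right _ hmono
  · rw [hsplusa, min_self, min_eq_left ha.le]
    exact mul_lt_mul_of_pos_left hgrow (hβ a)

theorem stmt5 (n : ℕ) (hn : 1 ≤ n) (c : ℝ) (hc : 0 < c)
    (β : Fin n → ℝ) (hβ : ∀ i, 0 < β i) (hsum : ∑ i, β i = 1)
    (s : Fin (n + 1) → ℝ) (hs0 : ∀ j, 0 ≤ s j) (hsc : ∑ j, s j = c)
    (a : Fin n) (ha : β a * s 0 < s a.succ)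
    (hamax : ∀ i : Fin n, β i * s 0 < s i.succ → s i.succ / β i ≤ s a.succ / β a)
    (splus : Fin (n + 1) → ℝ)
    (hsplus : splus = fun j => if j = a.succ then β a / (β a + 1) * (s 0 + s a.succ)
      else if j = 0 then 1 / (β a + 1) * (s 0 + s a.succ) else s j) :
    (∀ j, 0 ≤ splus j) ∧ (∑ j, splus j = c) ∧
    (∀ i : Fin n, min (β i * s 0) (s i.succ) ≤ min (β i * splus 0) (splus i.succ)) ∧
    min (β a * s 0) (s a.succ) < min (β a * splus 0) (splus a.succ) :=
  stmt5_general n c β hβ s hs0 hsc a ha splus hsplus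
end

section
/- Let B ∈ (ℝ⁺)ⁿ with ∑Bᵢ = c, set βᵢ = Bᵢ/∑ⱼBⱼ, and define U(s) = r·ω·∑_{i=1}^n Bᵢ·min(sᵢ, βᵢs₀)/(Bᵢ + min(sᵢ, βᵢs₀)) for positive constants r, ω. Then over all partitions s ∈ (ℝ≥0)^{n+1} with ∑_{i=0}^n sᵢ = c, U is maximized at s* = (c/2, β₁c/2, …, βₙc/2). -/
/-!
Write `mᵢ = min(sᵢ, βᵢ s₀)`. Since `∑ βᵢ = 1`, `∑ mᵢ` is at most both `s₀` and `c - s₀`, hence at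
most `c / 2`. Each term `Bᵢ mᵢ / (Bᵢ + mᵢ)` is concave in `mᵢ`, so it lies below its tangent at
`mᵢ = Bᵢ / 2`; summing the tangents gives `∑ Bᵢ mᵢ / (Bᵢ + mᵢ) ≤ c / 9 + 4/9 · c / 2 = c / 3`,
and `s*` attains this with `mᵢ = Bᵢ / 2` for every `i`.
-/

open Finset

/-- The tangent line of the concave map `x ↦ b x / (b + x)` at `x = b / 2`. -/
theorem mul_div_add_le_tangent_s7 {b x : ℝ} (hb : 0 < b) (hx : 0 ≤ x) :
    b * x / (b + x) ≤ b / 9 + 4 * x / 9 := by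
  rw [div_le_iff₀ (by positivity)]
  nlinarith [sq_nonneg (b - 2 * x)]

theorem sum_min_succ_le_half {n : ℕ} (s : Fin (n + 1) → ℝ) (β : Fin n → ℝ)
    (hs₀ : 0 ≤ s 0) (hβ : ∑ i, β i ≤ 1) :
    ∑ i : Fin n, min (s i.succ) (β i * s 0) ≤ (∑ j, s j) / 2 := by
  have h_succ : ∑ i : Fin n, min (s i.succ) (β i * s 0) ≤ ∑ i : Fin n, s i.succ :=
    sum_le_sum fun i _ => min_le_left _ _
  have h_zero : ∑ i : Fin n, min (s i.succ) (β i * s 0) ≤ s 0 :=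
    calc ∑ i : Fin n, min (s i.succ) (β i * s 0) ≤ ∑ i, β i * s 0 :=
          sum_le_sum fun i _ => min_le_right _ _
      _ = (∑ i, β i) * s 0 := (sum_mul ..).symm
      _ ≤ s 0 := mul_le_of_le_one_left hs₀ hβ
  rw [Fin.sum_univ_succ]
  linarith

theorem sum_mul_div_add_le_third {ι : Type*} [Fintype ι] (B m : ι → ℝ)
    (hB : ∀ i, 0 < B i) (hm : ∀ i, 0 ≤ m i) (hsum : ∑ i, m i ≤ (∑ i, B i) / 2) :
    ∑ i, B i * m i / (B i + m i) ≤ (∑ i, B i) / 3 :=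
  calc ∑ i, B i * m i / (B i + m i)
      ≤ ∑ i, (B i / 9 + 4 * m i / 9) :=
        sum_le_sum fun i _ => mul_div_add_le_tangent_s7 (hB i) (hm i)
    _ = (∑ i, B i) / 9 + 4 / 9 * ∑ i, m i := by
        rw [sum_add_distrib, ← sum_div, mul_sum]
        congr 1
        exact sum_congr rfl fun i _ => by ring
    _ ≤ (∑ i, B i) / 3 := by linarith

theorem stmt7_general (n : ℕ) (B : Fin n → ℝ) (hB : ∀ i, 0 < B i)
    (c : ℝ) (hc : c = ∑ i, B i) (r ω : ℝ) (hr : 0 < r) (hω : 0 < ω)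
    (β : Fin n → ℝ) (hβ : β = fun i => B i / ∑ j, B j)
    (U : (Fin (n + 1) → ℝ) → ℝ)
    (hU : U = fun s => r * ω * ∑ i,
      B i * min (s i.succ) (β i * s 0) / (B i + min (s i.succ) (β i * s 0)))
    (sstar : Fin (n + 1) → ℝ)
    (hsstar : sstar = fun j => if h : j = 0 then c / 2 else β (j.pred h) * c / 2) :
    ∀ s : Fin (n + 1) → ℝ, (∀ j, 0 ≤ s j) → ∑ j, s j = c → U s ≤ U sstar := by
  intro s hs hsum
  rw [← hc] at hβ
  have hβ_nonneg : ∀ i, 0 ≤ β i := fun i => by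
    rw [hβ, hc]; exact div_nonneg (hB i).le (sum_nonneg fun j _ => (hB j).le)
  have hβ_sum : ∑ i, β i ≤ 1 := by
    rw [hβ, ← sum_div]; exact hc ▸ div_self_le_one c
  have hβ_mul : ∀ i, β i * c = B i := fun i => by
    have : 0 < c := hc ▸ sum_pos (fun j _ => hB j) ⟨i, mem_univ i⟩
    rw [hβ]; field_simp
  have h_star : ∀ i, B i * min (sstar i.succ) (β i * sstar 0) /
      (B i + min (sstar i.succ) (β i * sstar 0)) = B i / 3 := fun i => by
    have := (hB i).ne'
    simp only [hsstar, Fin.succ_ne_zero, dite_false, Fin.pred_succ, dite_true, mul_div_assoc',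
      hβ_mul, min_self]
    field_simp
    ring
  subst hU
  simp only [h_star, ← sum_div, ← hc]
  gcongr
  rw [hc]
  refine sum_mul_div_add_le_third B _ hB
    (fun i => le_min (hs i.succ) (mul_nonneg (hβ_nonneg i) (hs 0))) ?_
  rw [← hc, ← hsum]
  exact sum_min_succ_le_half s β (hs 0) hβ_sum

theorem stmt7 (n : ℕ) (hn : 1 ≤ n) (B : Fin n → ℝ) (hB : ∀ i, 0 < B i)
    (c : ℝ) (hc : c = ∑ i, B i) (r ω : ℝ) (hr : 0 < r) (hω : 0 < ω)
    (β : Fin n → ℝ) (hβ : β = fun i => B i / ∑ j, B j)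
    (U : (Fin (n + 1) → ℝ) → ℝ)
    (hU : U = fun s => r * ω * ∑ i,
      B i * min (s i.succ) (β i * s 0) / (B i + min (s i.succ) (β i * s 0)))
    (sstar : Fin (n + 1) → ℝ)
    (hsstar : sstar = fun j => if h : j = 0 then c / 2 else β (j.pred h) * c / 2) :
    ∀ s : Fin (n + 1) → ℝ, (∀ j, 0 ≤ s j) → ∑ j, s j = c → U s ≤ U sstar :=
  stmt7_general n B hB c hc r ω hr hω β hβ U hU sstar hsstar
end

section
/- Let X₁,…,X_m be independent random variables with each Xᵢ = Uᵢ^{1/Sᵢ} for Uᵢ uniform on [0,1] and Sᵢ > 0. Then P(Xᵢ is the unique maximum) = Sᵢ / ∑_{k=1}^m S_k. -/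
open MeasureTheory

/-!
Condition on the coordinate `ω i = u` (Fubini). Given `ω i = u`, the remaining coordinates
are independent and `ω k ^ (1 / S k) < u ^ (1 / S i)` has probability `u ^ (S k / S i)`,
so the conditional probability that `i` wins is `u ^ (T / S i)` with `T = ∑_{k ≠ i} S k`.
Finally `∫₀¹ u ^ (T / S i) du = S i / (S i + T)`.
-/

theorem pi_setOf_forall_ne_lt_eq_lintegral {α : Type*} [MeasurableSpace α] {n : ℕ}
    (μ : Fin (n + 1) → Measure α) [∀ k, SigmaFinite (μ k)]
    (F : Fin (n + 1) → α → ℝ) (hF : ∀ k, Measurable (F k)) (i : Fin (n + 1)) :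
    Measure.pi μ {ω | ∀ k, k ≠ i → F k (ω k) < F i (ω i)}
      = ∫⁻ x, ∏ j, μ (i.succAbove j) {y | F (i.succAbove j) y < F i x} ∂μ i := by
  set B : Set (α × (Fin n → α)) := {p | ∀ j, F (i.succAbove j) (p.2 j) < F i p.1}
  have hB : MeasurableSet B := by
    simp only [B, Set.ofPred_forall]
    exact .iInter fun j =>
      measurableSet_lt ((hF _).comp ((measurable_pi_apply j).comp measurable_snd))
        ((hF i).comp measurable_fst)
  have hpre : {ω : Fin (n + 1) → α | ∀ k, k ≠ i → F k (ω k) < F i (ω i)}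
      = MeasurableEquiv.piFinSuccAbove (fun _ => α) i ⁻¹' B := by
    ext ω
    simp [B, Fin.removeNth, i.forall_iff_succAbove]
  rw [hpre, (measurePreserving_piFinSuccAbove μ i).measure_preimage hB.nullMeasurableSet,
    Measure.prod_apply hB]
  congr 1 with x
  rw [← Measure.pi_pi]
  congr 1 with y
  simp [B]

theorem volume_restrict_Icc_setOf_rpow_inv_lt {a w : ℝ} (ha : 0 < a) (hw₀ : 0 ≤ w)
    (hw₁ : w ≤ 1) :
    volume.restrict (Set.Icc (0 : ℝ) 1) {t | t ^ a⁻¹ < w} = ENNReal.ofReal (w ^ a) := by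
  have hmeas : MeasurableSet {t : ℝ | t ^ a⁻¹ < w} :=
    measurableSet_lt (Real.continuous_rpow_const (inv_nonneg.2 ha.le)).measurable measurable_const
  have hset : {t : ℝ | t ^ a⁻¹ < w} ∩ Set.Icc 0 1 = Set.Ico 0 (w ^ a) := by
    ext t
    simp only [Set.mem_inter_iff, Set.mem_ofPred_eq, Set.mem_Icc, Set.mem_Ico]
    constructor
    · rintro ⟨h, ht₀, -⟩
      exact ⟨ht₀, (Real.rpow_inv_lt_iff_of_pos ht₀ hw₀ ha).1 h⟩
    · rintro ⟨ht₀, h⟩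
      exact ⟨(Real.rpow_inv_lt_iff_of_pos ht₀ hw₀ ha).2 h, ht₀,
        h.le.trans (Real.rpow_le_one hw₀ hw₁ ha.le)⟩
  rw [Measure.restrict_apply hmeas, hset, Real.volume_Ico, sub_zero]

theorem setLIntegral_Icc_zero_one_rpow {c : ℝ} (hc : -1 < c) :
    ∫⁻ u in Set.Icc (0 : ℝ) 1, ENNReal.ofReal (u ^ c) = ENNReal.ofReal (1 / (c + 1)) := by
  have hint : IntegrableOn (fun u : ℝ => u ^ c) (Set.Ioc 0 1) :=
    (intervalIntegral.intervalIntegrable_rpow' hc).1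
  rw [setLIntegral_congr Ioc_ae_eq_Icc.symm, ← ofReal_integral_eq_lintegral_ofReal hint
    ((ae_restrict_iff' measurableSet_Ioc).2 (ae_of_all _ fun u hu => Real.rpow_nonneg hu.1.le _)),
    ← intervalIntegral.integral_of_le zero_le_one, integral_rpow (.inl hc), Real.one_rpow,
    Real.zero_rpow (by linarith), sub_zero]

theorem prod_volume_restrict_Icc_setOf_rpow_inv_lt {ι : Type*} (s : Finset ι)
    {a : ι → ℝ} {b u : ℝ} (ha : ∀ j, 0 < a j) (hb : 0 < b) (hu₀ : 0 ≤ u)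
    (hu₁ : u ≤ 1) :
    ∏ j ∈ s, volume.restrict (Set.Icc (0 : ℝ) 1) {t | t ^ (a j)⁻¹ < u ^ b⁻¹}
      = ENNReal.ofReal (u ^ ((∑ j ∈ s, a j) / b)) := by
  have hw₀ : 0 ≤ u ^ b⁻¹ := Real.rpow_nonneg hu₀ _
  have hw₁ : u ^ b⁻¹ ≤ 1 := Real.rpow_le_one hu₀ hu₁ (inv_nonneg.2 hb.le)
  simp_rw [volume_restrict_Icc_setOf_rpow_inv_lt (ha _) hw₀ hw₁, ← Real.rpow_mul hu₀]
  rw [← ENNReal.ofReal_prod_of_nonneg fun j _ => Real.rpow_nonneg hu₀ _,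
    ← Real.rpow_sum_of_nonneg hu₀ fun j _ => mul_nonneg (inv_nonneg.2 hb.le) (ha j).le,
    ← Finset.mul_sum, inv_mul_eq_div]

theorem stmt14_general (m : ℕ) (S : Fin m → ℝ) (hS : ∀ k, 0 < S k) (i : Fin m) :
    (Measure.pi fun _ : Fin m => volume.restrict (Set.Icc (0 : ℝ) 1))
      {ω : Fin m → ℝ | ∀ k, k ≠ i → ω k ^ ((1 : ℝ) / S k) < ω i ^ ((1 : ℝ) / S i)}
      = ENNReal.ofReal (S i / ∑ k, S k) := by
  obtain ⟨n, rfl⟩ : ∃ n, m = n + 1 := Nat.exists_eq_succ_of_ne_zero i.pos.ne'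
  have hsum : 0 ≤ ∑ j : Fin n, S (i.succAbove j) := Finset.sum_nonneg fun j _ => (hS _).le
  simp only [one_div]
  rw [pi_setOf_forall_ne_lt_eq_lintegral _ (fun k t => t ^ (S k)⁻¹)
      (fun k => (Real.continuous_rpow_const (inv_nonneg.2 (hS k).le)).measurable),
    setLIntegral_congr_fun measurableSet_Icc fun u hu =>
      prod_volume_restrict_Icc_setOf_rpow_inv_lt _ (fun j => hS _) (hS i) hu.1 hu.2,
    setLIntegral_Icc_zero_one_rpow (by linarith [div_nonneg hsum (hS i).le]),
    Fin.sum_univ_succAbove S i, div_add_one (hS i).ne', one_div_div, add_comm]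

theorem stmt14 (m : ℕ) (hm : 1 ≤ m) (S : Fin m → ℝ) (hS : ∀ k, 0 < S k) (i : Fin m) :
    (Measure.pi fun _ : Fin m => volume.restrict (Set.Icc (0 : ℝ) 1))
      {ω : Fin m → ℝ | ∀ k, k ≠ i → ω k ^ ((1 : ℝ) / S k) < ω i ^ ((1 : ℝ) / S i)}
      = ENNReal.ofReal (S i / ∑ k, S k) :=
  stmt14_general m S hS i
end
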